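/- arXiv:1411.7666 — 5 statements merged into one kernel-verified Lean document; each statement's English description precedes it below -/
import Mathlib

section
/- Let S be a nontrivial subspace of an n-dimensional complex inner product space H with orthonormal basis (w_1,…,w_n), and let d = dim(S^⊥). Then there exists k ≤ d+1 such that ⟨w_k, P_S w_k⟩ ≥ 1/(d+1). -/
/-!
The diagonal entries `⟪w k, P_S w k⟫` sum to `tr P_S = dim S = n - d`, and each is at most `1`.
Hence the `n - d - 1` indices beyond the first `d + 1` carry at most `n - d - 1`, leaving mass
at least `1` on the first `d + 1` indices, one of which must then reach the average `1 / (d + 1)`.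
-/

open Finset Module RCLike
open scoped InnerProductSpace

namespace Submodule

variable {𝕜 E : Type*} [RCLike 𝕜] [NormedAddCommGroup E] [InnerProductSpace 𝕜 E]

section HasOrthogonalProjection

variable (K : Submodule 𝕜 E) [K.HasOrthogonalProjection]

theorem isProj_starProjection : LinearMap.IsProj K (K.starProjection : E →ₗ[𝕜] E) where
  map_mem := K.starProjection_apply_mem
  map_id _ := K.starProjection_eq_self_iff.mpr

theorem re_inner_starProjection_le_norm_sq (x : E) :
    re ⟪x, K.starProjection x⟫_𝕜 ≤ ‖x‖ ^ 2 :=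
  calc re ⟪x, K.starProjection x⟫_𝕜 ≤ ‖x‖ * ‖K.starProjection x‖ :=
        (re_le_norm _).trans (norm_inner_le_norm _ _)
    _ ≤ ‖x‖ * ‖x‖ := by gcongr; exact K.norm_starProjection_apply_le x
    _ = ‖x‖ ^ 2 := (sq _).symm

end HasOrthogonalProjection

variable [FiniteDimensional 𝕜 E] (K : Submodule 𝕜 E)

theorem trace_starProjection :
    LinearMap.trace 𝕜 E (K.starProjection : E →ₗ[𝕜] E) = finrank 𝕜 K :=
  K.isProj_starProjection.trace

theorem sum_re_inner_starProjection {ι : Type*} [Fintype ι] (b : OrthonormalBasis ι 𝕜 E) :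
    ∑ i, re ⟪b i, K.starProjection (b i)⟫_𝕜 = finrank 𝕜 K := by
  rw [← map_sum, ← natCast_re (K := 𝕜), ← trace_starProjection,
    LinearMap.trace_eq_sum_inner _ b]
  rfl

end Submodule

theorem Finset.sum_sub_card_compl_le_sum {ι : Type*} [Fintype ι] [DecidableEq ι] (s : Finset ι)
    {a : ι → ℝ} (ha : ∀ i, a i ≤ 1) : ∑ i, a i - #sᶜ ≤ ∑ i ∈ s, a i := by
  have : ∑ i ∈ sᶜ, a i ≤ #sᶜ := by simpa using sum_le_card_nsmul sᶜ a 1 fun i _ ↦ ha i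
  rw [← sum_add_sum_compl s a]
  linarith

theorem OrthonormalBasis.exists_mem_le_re_inner_starProjection {𝕜 E ι : Type*} [RCLike 𝕜]
    [NormedAddCommGroup E] [InnerProductSpace 𝕜 E] [FiniteDimensional 𝕜 E] [Fintype ι]
    [DecidableEq ι] (b : OrthonormalBasis ι 𝕜 E) (K : Submodule 𝕜 E) {s : Finset ι}
    (hs : s.Nonempty) :
    ∃ i ∈ s, ((finrank 𝕜 K : ℝ) - #sᶜ) / #s ≤ re ⟪b i, K.starProjection (b i)⟫_𝕜 := by
  refine exists_le_of_sum_le hs ?_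
  rw [sum_const, nsmul_eq_mul, mul_div_cancel₀ _ (by positivity),
    ← K.sum_re_inner_starProjection b]
  exact s.sum_sub_card_compl_le_sum fun i ↦ by
    simpa [b.orthonormal.1 i] using K.re_inner_starProjection_le_norm_sq (b i)

/-- If `S` is a nonzero subspace of an `n`-dimensional complex inner product space with
orthonormal basis `w`, and `d = dim S^⊥`, then some `k` among the first `d+1` indices
satisfies `⟨w k, P_S (w k)⟩ ≥ 1/(d+1)`. -/
theorem exists_basis_vector_large_projection {n : ℕ}
    (S : Submodule ℂ (EuclideanSpace ℂ (Fin n))) (hS : S ≠ ⊥)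
    (w : OrthonormalBasis (Fin n) ℂ (EuclideanSpace ℂ (Fin n)))
    (d : ℕ) (hd : d = Module.finrank ℂ Sᗮ) :
    ∃ k : Fin n, (k : ℕ) < d + 1 ∧
      (1 : ℝ) / (d + 1) ≤
        (inner ℂ (w k) ((Submodule.orthogonalProjectionOnto S (w k) : EuclideanSpace ℂ (Fin n))) : ℂ).re := by
  have hS_pos : finrank ℂ S ≠ 0 := Submodule.finrank_eq_zero.not.mpr hS
  have hdim : finrank ℂ S + d = n := by
    rw [hd, S.finrank_add_finrank_orthogonal, finrank_euclideanSpace_fin]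
  have hdn : d < n := by omega
  obtain ⟨k, hk, hle⟩ :=
    w.exists_mem_le_re_inner_starProjection S (s := Iic ⟨d, hdn⟩) nonempty_Iic
  refine ⟨k, Nat.lt_succ_of_le (Fin.le_iff_val_le_val.mp (mem_Iic.mp hk)), ?_⟩
  have hcompl : #(Iic (⟨d, hdn⟩ : Fin n))ᶜ + 1 = finrank ℂ S := by
    rw [card_compl, Fin.card_Iic, Fintype.card_fin, Fin.val_mk]
    omega
  have hnum : (finrank ℂ S : ℝ) - #(Iic (⟨d, hdn⟩ : Fin n))ᶜ = 1 := by
    rw [← hcompl]; push_cast; ring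
  rwa [hnum, Fin.card_Iic, Nat.cast_succ] at hle
end

section
/- The sum ∑_{k=1}^{d+1} ⟨w_k, P_S w_k⟩ is at least dim(S ∩ span(w_1,…,w_{d+1})), which in turn is at least dim(S) + (d+1) − n ≥ 1, where S is a nonzero subspace of an n-dimensional inner product space, d = dim(S^⊥), and (w_k) is an orthonormal basis. -/
/-!
Put `T = span (w_k)_{k ≤ d+1}` and `U = S ⊓ T`. Since `U ≤ S`, `P_U ≤ P_S` in the Loewner order,
so `⟨w_k, P_S w_k⟩ ≥ ⟨w_k, P_U w_k⟩`. The right-hand side vanishes for `k > d + 1` because then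
`w_k ⊥ T`, and summed over all `k` it is `tr P_U = dim U`. The dimension bounds come from
Grassmann's formula `dim U ≥ dim S + dim T - n`, with `dim T = d + 1`, `dim S + d = n` and `dim S ≥ 1`.
-/

open Module Submodule
open scoped InnerProductSpace

theorem Submodule.finrank_add_finrank_le_finrank_inf_add_finrank {K V : Type*} [DivisionRing K]
    [AddCommGroup V] [Module K V] [FiniteDimensional K V] (s t : Submodule K V) :
    finrank K s + finrank K t ≤ finrank K ↥(s ⊓ t) + finrank K V := by
  rw [← finrank_sup_add_finrank_inf_eq, add_comm (finrank K ↥(s ⊔ t))]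
  exact Nat.add_le_add_left (s ⊔ t).finrank_le _

section InnerProductSpace

variable {𝕜 E ι : Type*} [RCLike 𝕜] [NormedAddCommGroup E] [InnerProductSpace 𝕜 E]

theorem Submodule.re_inner_starProjection_le_of_le {U V : Submodule 𝕜 E}
    [U.HasOrthogonalProjection] [V.HasOrthogonalProjection] (h : U ≤ V) (x : E) :
    RCLike.re ⟪x, U.starProjection x⟫_𝕜 ≤ RCLike.re ⟪x, V.starProjection x⟫_𝕜 := by
  have := (starProjection_le_starProjection_iff.mpr h).re_inner_nonneg_right x
  rw [sub_apply, inner_sub_right, map_sub] at this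
  linarith

theorem Submodule.sum_inner_starProjection_eq_finrank [Fintype ι] [FiniteDimensional 𝕜 E]
    (U : Submodule 𝕜 E) (w : OrthonormalBasis ι 𝕜 E) :
    ∑ i, ⟪w i, U.starProjection (w i)⟫_𝕜 = finrank 𝕜 U := by
  have hproj : LinearMap.IsProj U (U.starProjection : E →ₗ[𝕜] E) :=
    ⟨U.starProjection_apply_mem, fun _ hx ↦ starProjection_eq_self_iff.mpr hx⟩
  rw [← hproj.trace, LinearMap.trace_eq_sum_inner _ w]
  rfl

theorem Orthonormal.mem_orthogonal_span_image {v : ι → E} (hv : Orthonormal 𝕜 v) {s : Set ι}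
    {i : ι} (hi : i ∉ s) : v i ∈ (span 𝕜 (v '' s))ᗮ := by
  have : span 𝕜 {v i} ⟂ span 𝕜 (v '' s) := by
    rw [isOrtho_span]
    rintro _ rfl _ ⟨j, hj, rfl⟩
    exact hv.inner_eq_zero (ne_of_mem_of_not_mem hj hi).symm
  exact isOrtho_iff_le.mp this (mem_span_singleton_self _)

theorem Orthonormal.finrank_span_image {v : ι → E} (hv : Orthonormal 𝕜 v) (s : Finset ι) :
    finrank 𝕜 (span 𝕜 (v '' s)) = s.card := by
  rw [Set.image_eq_range]
  exact (finrank_span_eq_card (hv.linearIndependent.comp _ Subtype.val_injective)).trans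
    (Fintype.card_coe s)

theorem OrthonormalBasis.finrank_inf_span_image_le_sum_re_inner_starProjection [Fintype ι]
    [FiniteDimensional 𝕜 E] (K : Submodule 𝕜 E) (w : OrthonormalBasis ι 𝕜 E) (s : Finset ι) :
    (finrank 𝕜 ↥(K ⊓ span 𝕜 (w '' s)) : ℝ) ≤
      ∑ i ∈ s, RCLike.re ⟪w i, K.starProjection (w i)⟫_𝕜 := by
  set U := K ⊓ span 𝕜 (w '' s)
  have hU_out : ∀ i ∉ s, U.starProjection (w i) = 0 := fun i hi ↦
    (starProjection_apply_eq_zero_iff _).mpr <|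
      orthogonal_le inf_le_right (w.orthonormal.mem_orthogonal_span_image hi)
  calc (finrank 𝕜 U : ℝ) = ∑ i, RCLike.re ⟪w i, U.starProjection (w i)⟫_𝕜 := by
        rw [← map_sum, U.sum_inner_starProjection_eq_finrank w, RCLike.natCast_re]
    _ = ∑ i ∈ s, RCLike.re ⟪w i, U.starProjection (w i)⟫_𝕜 :=
        (Finset.sum_subset (Finset.subset_univ s) fun i _ hi ↦ by simp [hU_out i hi]).symm
    _ ≤ ∑ i ∈ s, RCLike.re ⟪w i, K.starProjection (w i)⟫_𝕜 :=
        Finset.sum_le_sum fun i _ ↦ re_inner_starProjection_le_of_le inf_le_left (w i)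

end InnerProductSpace

/-- For a nonzero subspace `S` of an `n`-dimensional complex inner product space with
orthonormal basis `w` and `d = dim S^⊥`:
`∑_{k=1}^{d+1} ⟨w k, P_S (w k)⟩ ≥ dim (S ⊓ span(w_1,…,w_{d+1})) ≥ dim S + (d+1) − n ≥ 1`. -/
theorem sum_projection_ge_dim_inter {n : ℕ}
    (S : Submodule ℂ (EuclideanSpace ℂ (Fin n))) (hS : S ≠ ⊥)
    (w : OrthonormalBasis (Fin n) ℂ (EuclideanSpace ℂ (Fin n)))
    (d : ℕ) (hd : d = Module.finrank ℂ Sᗮ) :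
    (Module.finrank ℂ
        ↥(S ⊓ Submodule.span ℂ (w '' {k : Fin n | (k : ℕ) < d + 1})) : ℝ) ≤
      ∑ k ∈ Finset.univ.filter (fun k : Fin n => (k : ℕ) < d + 1),
        (inner ℂ (w k) ((S.orthogonalProjectionOnto (w k) : EuclideanSpace ℂ (Fin n))) : ℂ).re ∧
    (Module.finrank ℂ S : ℤ) + (d + 1) - n ≤
      (Module.finrank ℂ
        ↥(S ⊓ Submodule.span ℂ (w '' {k : Fin n | (k : ℕ) < d + 1})) : ℤ) ∧
    (1 : ℤ) ≤ (Module.finrank ℂ S : ℤ) + (d + 1) - n := by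
  set s := Finset.univ.filter (fun k : Fin n => (k : ℕ) < d + 1)
  have hs : {k : Fin n | (k : ℕ) < d + 1} = s := by simp [s]
  rw [hs]
  have hS_add : finrank ℂ S + d = n := by
    rw [hd, finrank_add_finrank_orthogonal, finrank_euclideanSpace_fin]
  have hS_pos : 1 ≤ finrank ℂ S := one_le_finrank_iff.mpr hS
  have hT : finrank ℂ (span ℂ (w '' s)) = d + 1 := by
    rw [w.orthonormal.finrank_span_image, Fin.card_filter_val_lt]
    omega
  have hgrassmann := S.finrank_add_finrank_le_finrank_inf_add_finrank (span ℂ (w '' s))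
  rw [hT, finrank_euclideanSpace_fin] at hgrassmann
  exact ⟨w.finrank_inf_span_image_le_sum_re_inner_starProjection S s, by omega, by omega⟩
end

section
/- Define slog : ℕ × ℕ → ℕ recursively by slog(0, q) = 0 and slog(p, q) = slog(p − ⌈p/q⌉, q) + 1 for p ≥ 1 and q ≥ 1. Then slog is nondecreasing in its first argument: if p ≤ p', then slog(p, q) ≤ slog(p', q). -/
/-!
One step of the recursion sends `p` to `p - ⌈p/q⌉`. This map is monotone, because `⌈p/q⌉` grows
by at most one when `p` does, and it sends every positive `p` strictly below `p`. Strong induction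
on the larger argument then compares the two recursions step by step.
-/

/-- The step logarithm: `slog q 0 = 0` and `slog q p = slog q (p − ⌈p/q⌉) + 1` for `p ≥ 1`.
(For `q ≥ 1` and `p ≥ 1` we have `⌈p/q⌉ = (p + q - 1)/q ≥ 1`, so `max 1` is redundant
there and only serves to make the recursion terminate for all inputs.) -/
def slog (q : ℕ) : ℕ → ℕ
  | 0 => 0
  | p + 1 => slog q (p + 1 - max 1 ((p + 1 + q - 1) / q)) + 1
decreasing_by
  exact Nat.sub_lt (Nat.succ_pos p) (lt_of_lt_of_le Nat.zero_lt_one (le_max_left _ _))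

def slogStep (q p : ℕ) : ℕ := p - max 1 ((p + q - 1) / q)

theorem slog_succ (q p : ℕ) : slog q (p + 1) = slog q (slogStep q (p + 1)) + 1 := by
  rw [slog, slogStep]

theorem slogStep_lt {q p : ℕ} (hp : 0 < p) : slogStep q p < p := by
  unfold slogStep; omega

theorem slogStep_monotone (q : ℕ) : Monotone (slogStep q) := by
  refine monotone_nat_of_le_succ fun p => ?_
  have ceil_succ_le : (p + 1 + q - 1) / q ≤ (p + q - 1) / q + 1 := by
    rcases Nat.eq_zero_or_pos q with rfl | hq
    · simp
    calc (p + 1 + q - 1) / q ≤ (p + q - 1 + q) / q := Nat.div_le_div_right (by omega)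
      _ = (p + q - 1) / q + 1 := Nat.add_div_right _ hq
  unfold slogStep; omega

theorem slog_monotone (q : ℕ) : Monotone (slog q) := by
  suffices ∀ n p, p ≤ n → slog q p ≤ slog q n from fun p n h => this n p h
  intro n
  induction n using Nat.strong_induction_on with
  | _ n ih =>
    rintro (_ | p) h
    · simp [slog]
    · obtain ⟨m, rfl⟩ : ∃ m, n = m + 1 := ⟨n - 1, by omega⟩
      rw [slog_succ, slog_succ]
      exact Nat.add_le_add_right
        (ih _ (slogStep_lt m.succ_pos) _ (slogStep_monotone q h)) 1

theorem slog_mono_general (q : ℕ) (p p' : ℕ) (h : p ≤ p') :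
    slog q p ≤ slog q p' :=
  slog_monotone q h

/-- `slog` is nondecreasing in its first (paper) argument. -/
theorem slog_mono (q : ℕ) (hq : 1 ≤ q) (p p' : ℕ) (h : p ≤ p') :
    slog q p ≤ slog q p' :=
  slog_mono_general q p p' h
end

section
/- Every code of the quantum graph Q_{n,m} has dimension at most ⌈n/(m+1)⌉. -/
/-!
Let `d = rank P` and let `ε_i` be the scalar with `P A_i P = ε_i P`. The range of `P` has
dimension `d`, so it contains a nonzero vector orthogonal to the top `d - 1` eigenvectors of `A_i`;
its Rayleigh quotient gives `ε_i ≤ λ_{i,d-1}`. For an eigenvector `w = w_{i,ℓ}` with `ℓ < d - 1`,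
the weight `s = ⟨w, P w⟩` satisfies `λ_{i,ℓ} s² ≤ ⟨P w, A_i P w⟩ = ε_i s`, and tropicality
(`λ_{i,d-1} < λ_{i,ℓ} / n²`) forces `s < 1/n²`. The weights of the basis `ws` lie in `[0, 1]` and
sum to `trace P = d`, while the first `m (d - 1)` of them sit at levels `ℓ < d - 1`; as these
contribute less than `1` in total, `d + m (d - 1) ≤ n`.
-/

open Matrix

/-- The tropical, cyclical, commutative quantum graph `Q_{n,m}`: its edge space is spanned
by the identity together with `m` commuting positive self-adjoint operators `A i` with a
common orthonormal eigenbasis; for each `i`, `w i` lists the eigenvectors of `A i` in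
decreasing order of eigenvalue `lam i`, the eigenvalues are tropically separated
(`0 < λ_{i,j+1} < λ_{i,j}/n²`), consecutive labelings are cyclic shifts by
`⌊n/m⌋ (+1 for the first n mod m indices)`, and `ws` is the single-index relabeling in
which `w_{(k−1)m+1},…,w_{km}` each equal `w_{i,k}` for some `i`. -/
structure Qnm (n m : ℕ) where
  A : Fin m → Matrix (Fin n) (Fin n) ℂ
  herm : ∀ i, (A i).IsHermitian
  comm : ∀ i j, A i * A j = A j * A i
  lam : Fin m → Fin n → ℝ
  w : Fin m → Fin n → (Fin n → ℂ)
  ws : Fin n → (Fin n → ℂ)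
  ortho : ∀ i j k, star (w i j) ⬝ᵥ w i k = if j = k then 1 else 0
  span : ∀ i, Submodule.span ℂ (Set.range (w i)) = ⊤
  eig : ∀ i j, (A i).mulVec (w i j) = (lam i j : ℂ) • w i j
  pos : ∀ i j, 0 < lam i j
  tropical : ∀ i (j : Fin n) (h : (j : ℕ) + 1 < n),
    lam i ⟨(j : ℕ) + 1, h⟩ < lam i j / (n : ℝ) ^ 2
  cyclical : ∀ (i : Fin m) (hi : (i : ℕ) + 1 < m) (j : Fin n),
    w ⟨(i : ℕ) + 1, hi⟩ j =
      w i ⟨((j : ℕ) + n / m + if (i : ℕ) + 1 ≤ n % m then 1 else 0) % n,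
        Nat.mod_lt _ (Nat.lt_of_le_of_lt (Nat.zero_le _) j.isLt)⟩
  relabel : ∀ t : Fin n, ∃ i : Fin m,
    ws t = w i ⟨(t : ℕ) / m, Nat.lt_of_le_of_lt (Nat.div_le_self _ _) t.isLt⟩
  wsortho : ∀ s t, star (ws s) ⬝ᵥ ws t = if s = t then 1 else 0
  wsspan : Submodule.span ℂ (Set.range ws) = ⊤

/-- A code of `Q_{n,m}`: an (orthogonal projection onto a) subspace `C` with
`P_C A P_C = ε_C(A) P_C` for every edge operator `A` (equivalently, for the identity
and each basis operator `A i`). -/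
def Qnm.IsCode {n m : ℕ} (Q : Qnm n m) (P : Matrix (Fin n) (Fin n) ℂ) : Prop :=
  P.IsHermitian ∧ P * P = P ∧ ∀ i, ∃ ε : ℝ, P * Q.A i * P = (ε : ℂ) • P

namespace Matrix

variable {𝕜 ι : Type*} [RCLike 𝕜] [Fintype ι]

theorem trace_eq_rank_of_isIdempotentElem [DecidableEq ι] {K : Type*} [Field K]
    {P : Matrix ι ι K} (hP : IsIdempotentElem P) : P.trace = P.rank := by
  have hP' : IsIdempotentElem (toLin' P) := hP.map toLinAlgEquiv'
  rw [← trace_toLin'_eq, (LinearMap.IsIdempotentElem.isProj_range _ hP').trace]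
  rfl

theorem exists_ne_zero_mem_forall_star_dotProduct_eq_zero {κ : Type*} {V : Submodule 𝕜 (ι → 𝕜)}
    (u : κ → ι → 𝕜) (s : Finset κ) (hs : s.card < Module.finrank 𝕜 V) :
    ∃ c ∈ V, c ≠ 0 ∧ ∀ k ∈ s, star (u k) ⬝ᵥ c = 0 := by
  let φ : V →ₗ[𝕜] s → 𝕜 := (of fun (k : s) r => star (u k r)).mulVecLin ∘ₗ V.subtype
  have hker : LinearMap.ker φ ≠ ⊥ := LinearMap.ker_ne_bot_of_finrank_lt (by simpa using hs)
  obtain ⟨x, hx, hx0⟩ := Submodule.exists_mem_ne_zero_of_ne_bot hker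
  exact ⟨x, x.2, by simpa using hx0, fun k hk => congrFun hx ⟨k, hk⟩⟩

section Orthonormal

variable [DecidableEq ι] {w : ι → ι → 𝕜}

theorem conjTranspose_mul_self_of_orthonormal
    (hw : ∀ j k, star (w j) ⬝ᵥ w k = if j = k then 1 else 0) : (of w)ᵀᴴ * (of w)ᵀ = 1 := by
  ext j k
  simpa [mul_apply, one_apply, dotProduct] using hw j k

theorem sum_dotProduct_smul_of_orthonormal
    (hw : ∀ j k, star (w j) ⬝ᵥ w k = if j = k then 1 else 0) (c : ι → 𝕜) :
    ∑ k, (star (w k) ⬝ᵥ c) • w k = c := by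
  have h := congrArg (· *ᵥ c) (mul_eq_one_comm.mp (conjTranspose_mul_self_of_orthonormal hw))
  simp only [← mulVec_mulVec, one_mulVec] at h
  conv_rhs => rw [← h]
  ext r
  simp [mulVec, dotProduct, Finset.sum_apply, mul_comm]

theorem trace_eq_sum_of_orthonormal
    (hw : ∀ j k, star (w j) ⬝ᵥ w k = if j = k then 1 else 0) (M : Matrix ι ι 𝕜) :
    M.trace = ∑ k, star (w k) ⬝ᵥ (M *ᵥ w k) := by
  have h := mul_eq_one_comm.mp (conjTranspose_mul_self_of_orthonormal hw)
  calc M.trace = (M * (of w)ᵀ * (of w)ᵀᴴ).trace := by rw [mul_assoc, h, mul_one]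
    _ = ((of w)ᵀᴴ * (M * (of w)ᵀ)).trace := trace_mul_comm _ _
    _ = ∑ k, star (w k) ⬝ᵥ (M *ᵥ w k) := by simp [trace, mul_apply, dotProduct, mulVec]

theorem star_dotProduct_mulVec_of_eigenvectors
    (hw : ∀ j k, star (w j) ⬝ᵥ w k = if j = k then 1 else 0) {A : Matrix ι ι 𝕜} {μ : ι → ℝ}
    (hA : ∀ k, A *ᵥ w k = (μ k : 𝕜) • w k) (c : ι → 𝕜) :
    star c ⬝ᵥ (A *ᵥ c) = ((∑ k, μ k * ‖star (w k) ⬝ᵥ c‖ ^ 2 : ℝ) : 𝕜) := by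
  nth_rw 2 [← sum_dotProduct_smul_of_orthonormal hw c]
  simp only [mulVec_sum, mulVec_smul, hA, dotProduct_sum, dotProduct_smul, smul_eq_mul]
  push_cast
  refine Finset.sum_congr rfl fun k _ => ?_
  rw [star_dotProduct c (w k), ← RCLike.mul_conj]
  simp only [RCLike.star_def]
  ring

theorem star_dotProduct_self_of_orthonormal
    (hw : ∀ j k, star (w j) ⬝ᵥ w k = if j = k then 1 else 0) (c : ι → 𝕜) :
    star c ⬝ᵥ c = ((∑ k, ‖star (w k) ⬝ᵥ c‖ ^ 2 : ℝ) : 𝕜) := by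
  simpa using star_dotProduct_mulVec_of_eigenvectors hw (A := 1) (μ := 1) (by simp) c

end Orthonormal

theorem star_dotProduct_mulVec_of_mul_mul_eq_smul {P A : Matrix ι ι 𝕜} {ε : 𝕜}
    (hP : P.IsHermitian) (hPA : P * A * P = ε • P) {c : ι → 𝕜} (hc : P *ᵥ c = c) :
    star c ⬝ᵥ (A *ᵥ c) = ε * (star c ⬝ᵥ c) :=
  calc star c ⬝ᵥ (A *ᵥ c) = star (P *ᵥ c) ⬝ᵥ (A *ᵥ (P *ᵥ c)) := by rw [hc]
    _ = star c ⬝ᵥ ((P * A * P) *ᵥ c) := by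
      rw [star_mulVec, ← dotProduct_mulVec, hP.eq, mulVec_mulVec, mulVec_mulVec, mul_assoc]
    _ = ε * (star c ⬝ᵥ c) := by rw [hPA, smul_mulVec, hc, dotProduct_smul, smul_eq_mul]

theorem star_dotProduct_mulVec_eq_of_isIdempotentElem {P : Matrix ι ι 𝕜} (hP : P.IsHermitian)
    (hPP : IsIdempotentElem P) (v : ι → 𝕜) :
    star v ⬝ᵥ (P *ᵥ v) = star (P *ᵥ v) ⬝ᵥ (P *ᵥ v) := by
  rw [star_mulVec, ← dotProduct_mulVec, mulVec_mulVec, hP.eq, hPP.eq]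

theorem re_star_dotProduct_mulVec_nonneg {P : Matrix ι ι 𝕜} (hP : P.IsHermitian)
    (hPP : IsIdempotentElem P) (v : ι → 𝕜) : 0 ≤ RCLike.re (star v ⬝ᵥ (P *ᵥ v)) := by
  rw [star_dotProduct_mulVec_eq_of_isIdempotentElem hP hPP]
  simp only [dotProduct, Pi.star_apply, RCLike.star_def, RCLike.conj_mul, map_sum,
    RCLike.re_ofReal_pow]
  positivity

theorem re_star_dotProduct_mulVec_le [DecidableEq ι] {P : Matrix ι ι 𝕜} (hP : P.IsHermitian)
    (hPP : IsIdempotentElem P) (v : ι → 𝕜) :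
    RCLike.re (star v ⬝ᵥ (P *ᵥ v)) ≤ RCLike.re (star v ⬝ᵥ v) := by
  have h := re_star_dotProduct_mulVec_nonneg (isHermitian_one.sub hP) hPP.one_sub v
  simpa [sub_mulVec, dotProduct_sub] using h

section Compression

variable [DecidableEq ι] {P A : Matrix ι ι 𝕜} {w : ι → ι → 𝕜} {μ : ι → ℝ} {ε : ℝ}

theorem le_of_mul_mul_eq_smul_of_card_lt_rank (hP : P.IsHermitian) (hPP : IsIdempotentElem P)
    (hPA : P * A * P = (ε : 𝕜) • P) (hw : ∀ j k, star (w j) ⬝ᵥ w k = if j = k then 1 else 0)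
    (hA : ∀ k, A *ᵥ w k = (μ k : 𝕜) • w k) {s : Finset ι} {ν : ℝ} (hν : ∀ k ∉ s, μ k ≤ ν)
    (hs : s.card < P.rank) : ε ≤ ν := by
  obtain ⟨c, hcP, hc0, hcs⟩ := exists_ne_zero_mem_forall_star_dotProduct_eq_zero w s hs
  have hc : P *ᵥ c = c := by
    obtain ⟨v, rfl⟩ := hcP
    exact (mulVec_mulVec v P P).trans (congrArg (· *ᵥ v) hPP.eq)
  set y := fun k => star (w k) ⬝ᵥ c
  have hεy : ε * ∑ k, ‖y k‖ ^ 2 = ∑ k, μ k * ‖y k‖ ^ 2 := by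
    have h := star_dotProduct_mulVec_of_mul_mul_eq_smul hP hPA hc
    rw [star_dotProduct_mulVec_of_eigenvectors hw hA, star_dotProduct_self_of_orthonormal hw] at h
    exact_mod_cast h.symm
  have hy : 0 < ∑ k, ‖y k‖ ^ 2 := by
    obtain ⟨k, hk⟩ : ∃ k, y k ≠ 0 := by
      by_contra! h
      have h' : ∀ k, star (w k) ⬝ᵥ c = 0 := h
      exact hc0 (by simpa [h'] using (sum_dotProduct_smul_of_orthonormal hw c).symm)
    exact Finset.sum_pos' (fun _ _ => by positivity) ⟨k, Finset.mem_univ _, by positivity⟩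
  have hμν : ∑ k, μ k * ‖y k‖ ^ 2 ≤ ν * ∑ k, ‖y k‖ ^ 2 := by
    rw [Finset.mul_sum]
    refine Finset.sum_le_sum fun k _ => ?_
    by_cases hk : k ∈ s
    · simp [y, hcs k hk]
    · exact mul_le_mul_of_nonneg_right (hν k hk) (by positivity)
  exact le_of_mul_le_mul_right (hεy ▸ hμν) hy

theorem mul_sq_re_le_mul_re_of_mul_mul_eq_smul (hP : P.IsHermitian) (hPP : IsIdempotentElem P)
    (hPA : P * A * P = (ε : 𝕜) • P) (hw : ∀ j k, star (w j) ⬝ᵥ w k = if j = k then 1 else 0)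
    (hA : ∀ k, A *ᵥ w k = (μ k : 𝕜) • w k) (hμ : ∀ k, 0 ≤ μ k) (l : ι) :
    μ l * RCLike.re (star (w l) ⬝ᵥ (P *ᵥ w l)) ^ 2 ≤ ε * RCLike.re (star (w l) ⬝ᵥ (P *ᵥ w l)) := by
  have hc : P *ᵥ (P *ᵥ w l) = P *ᵥ w l := by rw [mulVec_mulVec, hPP.eq]
  set c := P *ᵥ w l
  have hcc : star c ⬝ᵥ c = star (w l) ⬝ᵥ c :=
    (star_dotProduct_mulVec_eq_of_isIdempotentElem hP hPP (w l)).symm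
  have h := star_dotProduct_mulVec_of_mul_mul_eq_smul hP hPA hc
  rw [star_dotProduct_mulVec_of_eigenvectors hw hA, hcc] at h
  have h' := congrArg RCLike.re h
  simp only [RCLike.ofReal_re, RCLike.re_ofReal_mul] at h'
  have hnorm : ‖star (w l) ⬝ᵥ c‖ ^ 2 = RCLike.re (star (w l) ⬝ᵥ c) ^ 2 := by
    have him : RCLike.im (star (w l) ⬝ᵥ c) = 0 := hP.im_star_dotProduct_mulVec_self (w l)
    rw [RCLike.norm_sq_eq_def, him]
    ring
  rw [← h', ← hnorm]
  exact Finset.single_le_sum (f := fun k => μ k * ‖star (w k) ⬝ᵥ c‖ ^ 2)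
    (fun k _ => mul_nonneg (hμ k) (by positivity)) (Finset.mem_univ l)

end Compression

end Matrix

theorem lt_div_of_lt_of_succ_lt_div {n : ℕ} {f : Fin n → ℝ} {q : ℝ} (hq : 1 ≤ q)
    (hf : ∀ j, 0 < f j) (h : ∀ (j : Fin n) (hj : (j : ℕ) + 1 < n), f ⟨j + 1, hj⟩ < f j / q)
    {a b : Fin n} (hab : a < b) : f b < f a / q := by
  obtain ⟨b, hb⟩ := b
  induction b with
  | zero => exact absurd (Fin.lt_def.mp hab) (Nat.not_lt_zero _)
  | succ b ih =>
    have hstep := h ⟨b, by omega⟩ hb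
    rcases (Nat.lt_succ_iff.mp (Fin.lt_def.mp hab)).eq_or_lt with hab' | hab'
    · rwa [show a = ⟨b, by omega⟩ from Fin.ext hab']
    · calc f ⟨b + 1, hb⟩ < f ⟨b, _⟩ / q := hstep
        _ ≤ f ⟨b, _⟩ := div_le_self (hf _).le hq
        _ < f a / q := ih (by omega) hab'

theorem add_card_le_of_sum_eq {ι : Type*} [Fintype ι] [DecidableEq ι] {f : ι → ℝ} {d : ℕ}
    {F : Finset ι} (hsum : ∑ t, f t = d) (hle : ∀ t, f t ≤ 1)
    (hF : ∀ t ∈ F, f t < 1 / (Fintype.card ι : ℝ) ^ 2) : d + F.card ≤ Fintype.card ι := by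
  have hFsum : ∑ t ∈ F, f t < 1 := by
    rcases F.eq_empty_or_nonempty with rfl | hne
    · simp
    have hcard : (F.card : ℝ) ≤ Fintype.card ι := by exact_mod_cast F.card_le_univ
    have hι : (1 : ℝ) ≤ Fintype.card ι := by exact_mod_cast hne.card_pos.trans_le F.card_le_univ
    calc ∑ t ∈ F, f t < ∑ t ∈ F, 1 / (Fintype.card ι : ℝ) ^ 2 :=
          Finset.sum_lt_sum_of_nonempty hne hF
      _ = F.card / (Fintype.card ι : ℝ) ^ 2 := by simp [div_eq_mul_inv]
      _ ≤ 1 := by rw [div_le_one (by positivity)]; nlinarith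
  have hcompl : ∑ t ∈ Fᶜ, f t ≤ Fᶜ.card := by
    simpa using Finset.sum_le_card_nsmul Fᶜ f 1 fun t _ => hle t
  have hd : (d : ℝ) < Fᶜ.card + 1 := by
    rw [← hsum, ← Finset.sum_add_sum_compl F]
    linarith
  have hd' : d < Fᶜ.card + 1 := by exact_mod_cast hd
  rw [Finset.card_compl] at hd'
  have := F.card_le_univ
  omega

namespace Qnm

variable {n m : ℕ} (Q : Qnm n m)

theorem lam_lt_div_of_lt (i : Fin m) {a b : Fin n} (hab : a < b) :
    Q.lam i b < Q.lam i a / (n : ℝ) ^ 2 :=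
  lt_div_of_lt_of_succ_lt_div (one_le_pow₀ (by exact_mod_cast a.pos)) (Q.pos i) (Q.tropical i) hab

theorem lam_le_of_le (i : Fin m) {a b : Fin n} (hab : a ≤ b) : Q.lam i b ≤ Q.lam i a := by
  rcases hab.eq_or_lt with rfl | hab
  · rfl
  · exact (Q.lam_lt_div_of_lt i hab).le.trans
      (div_le_self (Q.pos i a).le (one_le_pow₀ (by exact_mod_cast a.pos)))

variable {P : Matrix (Fin n) (Fin n) ℂ} {i : Fin m} {ε : ℝ}

theorem le_lam_of_lt_rank (hP : P.IsHermitian) (hPP : IsIdempotentElem P)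
    (hε : P * Q.A i * P = (ε : ℂ) • P) {K : Fin n} (hK : (K : ℕ) < P.rank) : ε ≤ Q.lam i K :=
  le_of_mul_mul_eq_smul_of_card_lt_rank hP hPP hε (Q.ortho i) (Q.eig i) (s := Finset.Iio K)
    (fun k hk => Q.lam_le_of_le i (not_lt.mp (by simpa using hk))) (by simpa using hK)

theorem re_star_dotProduct_mulVec_lt (hP : P.IsHermitian) (hPP : IsIdempotentElem P)
    (hε : P * Q.A i * P = (ε : ℂ) • P) {K : Fin n} (hεK : ε ≤ Q.lam i K) {l : Fin n} (hl : l < K) :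
    RCLike.re (star (Q.w i l) ⬝ᵥ (P *ᵥ Q.w i l)) < 1 / (n : ℝ) ^ 2 := by
  set s := RCLike.re (star (Q.w i l) ⬝ᵥ (P *ᵥ Q.w i l))
  have hs : 0 ≤ s := re_star_dotProduct_mulVec_nonneg hP hPP _
  have hsq : Q.lam i l * s ^ 2 ≤ ε * s :=
    mul_sq_re_le_mul_re_of_mul_mul_eq_smul hP hPP hε (Q.ortho i) (Q.eig i)
      (fun k => (Q.pos i k).le) l
  have hKl := Q.lam_lt_div_of_lt i hl
  have hl0 := Q.pos i l
  have hn : (0 : ℝ) < (n : ℝ) ^ 2 := by have := l.pos; positivity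
  rcases hs.eq_or_lt with hs0 | hs0
  · rw [← hs0]; positivity
  have hlK : Q.lam i l * s ≤ Q.lam i K :=
    le_of_mul_le_mul_right (by nlinarith [mul_le_mul_of_nonneg_right hεK hs]) hs0
  rw [lt_div_iff₀ hn] at hKl ⊢
  nlinarith [mul_le_mul_of_nonneg_right hlK hn.le]

end Qnm

theorem code_dim_le_ceiling_general {n m : ℕ} (hm : 1 ≤ m) (Q : Qnm n m)
    (P : Matrix (Fin n) (Fin n) ℂ) (hP : Q.IsCode P) :
    P.rank ≤ (n + m) / (m + 1) := by
  obtain ⟨hPh, hPP, hPA⟩ := hP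
  choose ε hε using hPA
  rcases Nat.eq_zero_or_pos P.rank with h | hpos
  · simp [h]
  obtain ⟨e, he⟩ := Nat.exists_eq_add_one_of_ne_zero hpos.ne'
  have hdn : P.rank ≤ n := by simpa using P.rank_le_card_width
  let K : Fin n := ⟨e, by omega⟩
  have hεK : ∀ i, ε i ≤ Q.lam i K := fun i => Q.le_lam_of_lt_rank hPh hPP (hε i) (by simp [K, he])
  have hsum : ∑ t, RCLike.re (star (Q.ws t) ⬝ᵥ (P *ᵥ Q.ws t)) = P.rank := by
    have h := trace_eq_sum_of_orthonormal Q.wsortho P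
    rw [trace_eq_rank_of_isIdempotentElem hPP] at h
    simpa using congrArg RCLike.re h.symm
  have hle : ∀ t, RCLike.re (star (Q.ws t) ⬝ᵥ (P *ᵥ Q.ws t)) ≤ 1 := fun t =>
    (re_star_dotProduct_mulVec_le hPh hPP _).trans (by simp [Q.wsortho])
  have hsmall : ∀ t ∈ ({t : Fin n | (t : ℕ) < m * e} : Finset (Fin n)),
      RCLike.re (star (Q.ws t) ⬝ᵥ (P *ᵥ Q.ws t)) < 1 / (Fintype.card (Fin n) : ℝ) ^ 2 := by
    intro t ht
    obtain ⟨i, hi⟩ := Q.relabel t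
    rw [hi, Fintype.card_fin]
    refine Q.re_star_dotProduct_mulVec_lt hPh hPP (hε i) (hεK i) ?_
    simp only [Finset.mem_filter, Finset.mem_univ, true_and] at ht
    simp [K, Fin.lt_def, Nat.div_lt_iff_lt_mul hm, mul_comm, ht]
  have hcount := add_card_le_of_sum_eq hsum hle hsmall
  rw [Fin.card_filter_val_lt, Fintype.card_fin] at hcount
  rw [Nat.le_div_iff_mul_le (by omega), he, show (e + 1) * (m + 1) = m * e + e + m + 1 by ring]
  rw [he] at hcount
  generalize m * e = x at hcount ⊢
  omega

/-- Every code of `Q_{n,m}` has dimension at most `⌈n/(m+1)⌉ = (n + m)/(m + 1)`. -/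
theorem code_dim_le_ceiling {n m : ℕ} (hn : 1 ≤ n) (hm : 1 ≤ m) (Q : Qnm n m)
    (P : Matrix (Fin n) (Fin n) ℂ) (hP : Q.IsCode P) :
    P.rank ≤ (n + m) / (m + 1) :=
  code_dim_le_ceiling_general hm Q P hP
end

section
/- Every quantum graph G has a code of dimension at least ⌈|G| / (‖G‖+1)²⌉, where |G| = dim V(G) and ‖G‖ = dim E(G) − 1. -/
/-!
Greedily choose unit vectors `x₁, …, x_m` such that every `A ∈ E(G)` compresses to a diagonal
matrix on their span: a new vector only has to be orthogonal to the vectors `A_k x_i` for a basis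
`(A_k)` of `E(G)`, which is possible while `(m - 1) · dim E(G) < |G|`. Each `x_i` defines the
functional `A ↦ ⟪x_i, A x_i⟫` on `E(G)`, a point of the hyperplane `{φ | φ 1 = 1}` of `E(G)*`.
Tverberg's theorem (proved by Sarkaria's tensor trick from Bárány's colorful Carathéodory
theorem) partitions these points into groups whose convex hulls share a point `ε`. With the
corresponding weights `w_i`, the vectors `W_j = ∑_{i in group j} √w_i • x_i` are orthonormal and
satisfy `⟪W_j, A W_l⟫ = δ_{jl} ε(A)`, so the projection onto their span is a code.
-/

open Matrix

structure QuantumGraph (n : ℕ) where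
  E : Submodule ℝ (Matrix (Fin n) (Fin n) ℂ)
  herm : ∀ A ∈ E, A.IsHermitian
  one_mem : (1 : Matrix (Fin n) (Fin n) ℂ) ∈ E

def IsCodeProj {n : ℕ} (G : QuantumGraph n) (P : Matrix (Fin n) (Fin n) ℂ)
    (ε : Matrix (Fin n) (Fin n) ℂ → ℝ) : Prop :=
  P.IsHermitian ∧ P * P = P ∧ ∀ A ∈ G.E, P * A * P = (ε A : ℂ) • P

open Module Metric Finset Set
open scoped InnerProductSpace

section ConvexGeometry

variable {ι E : Type*} [AddCommGroup E] [Module ℝ E]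

theorem exists_weights_of_mem_convexHull_range [Fintype ι] {v : ι → E} {x : E}
    (hx : x ∈ convexHull ℝ (range v)) :
    ∃ w : ι → ℝ, (∀ i, 0 ≤ w i) ∧ ∑ i, w i = 1 ∧ ∑ i, w i • v i = x := by
  classical
  have hv : range v = Fintype.linearCombination ℝ v '' range fun i => Pi.single i 1 := by
    rw [← Set.range_comp]
    congr 1
    ext i
    simp [Fintype.linearCombination_apply, Pi.single_apply]
  rw [hv, ← LinearMap.image_convexHull, convexHull_rangle_single_eq_stdSimplex] at hx
  obtain ⟨w, ⟨hw₀, hw₁⟩, rfl⟩ := hx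
  exact ⟨w, hw₀, hw₁, Fintype.linearCombination_apply ℝ v w⟩

theorem zero_mem_convexHull_range_of_sum_eq_zero [Fintype ι] [Nonempty ι] {v : ι → E}
    (hv : ∑ i, v i = 0) : (0 : E) ∈ convexHull ℝ (range v) := by
  refine mem_convexHull_of_exists_fintype (fun _ => (Fintype.card ι : ℝ)⁻¹) v
    (fun _ => by positivity) ?_ (fun i => mem_range_self i) ?_
  · simp [Finset.card_univ]
  · rw [← Finset.smul_sum, hv, smul_zero]

theorem exists_apply_nonpos_of_zero_mem_convexHull {s : Set E} (hs : (0 : E) ∈ convexHull ℝ s)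
    (φ : E →ₗ[ℝ] ℝ) : ∃ y ∈ s, φ y ≤ 0 := by
  by_contra! h
  have : convexHull ℝ s ⊆ {y | 0 < φ y} :=
    convexHull_min h (convex_halfSpace_gt φ.isLinear 0)
  simpa using this hs

theorem mem_convexHull_image_of_le_of_eq [Fintype ι] {x : ι → E} {z : E}
    (hz : z ∈ convexHull ℝ (range x)) (φ : E →ₗ[ℝ] ℝ) {c : ℝ} (hle : ∀ i, c ≤ φ (x i))
    (hzc : φ z = c) : z ∈ convexHull ℝ (x '' {i | φ (x i) = c}) := by
  classical
  obtain ⟨w, hw₀, hw₁, rfl⟩ := exists_weights_of_mem_convexHull_range hz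
  have hterm : ∀ i, w i * (φ (x i) - c) = 0 := by
    have hsum : ∑ i, w i * (φ (x i) - c) = 0 := by
      simp only [mul_sub, Finset.sum_sub_distrib, ← Finset.sum_mul, hw₁, one_mul]
      simp [map_sum, ← hzc]
    exact fun i => (Finset.sum_eq_zero_iff_of_nonneg fun i _ =>
      mul_nonneg (hw₀ i) (sub_nonneg.2 (hle i))).1 hsum i (Finset.mem_univ i)
  set F := Finset.univ.filter fun i => φ (x i) = c
  have hzero : ∀ i ∉ F, w i = 0 := fun i hi => by
    have : φ (x i) - c ≠ 0 := sub_ne_zero.2 (by simpa [F] using hi)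
    simpa [this] using hterm i
  have hF₁ : ∑ i ∈ F, w i = 1 := by
    rw [← hw₁, Finset.sum_subset (Finset.subset_univ F) fun i _ hi => hzero i hi]
  have hF : ∑ i ∈ F, w i • x i = ∑ i, w i • x i :=
    Finset.sum_subset (Finset.subset_univ F) fun i _ hi => by simp [hzero i hi]
  rw [← hF, ← Finset.centerMass_eq_of_sum_1 _ _ hF₁]
  exact F.centerMass_mem_convexHull (fun i _ => hw₀ i) (by simp [hF₁])
    fun i hi => mem_image_of_mem x (by simpa [F] using hi)

theorem card_le_finrank_of_affineIndependent_of_apply_eq [FiniteDimensional ℝ E] {t : Finset E}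
    (ht : AffineIndependent ℝ ((↑) : t → E)) {φ : E →ₗ[ℝ] ℝ} (hφ : φ ≠ 0) {c : ℝ}
    (htc : ∀ y ∈ t, φ y = c) : #t ≤ finrank ℝ E := by
  have hspan : vectorSpan ℝ (range ((↑) : t → E)) ≤ LinearMap.ker φ := by
    rw [vectorSpan_def, Submodule.span_le]
    rintro _ ⟨p, ⟨⟨p, hp⟩, rfl⟩, q, ⟨⟨q, hq⟩, rfl⟩, rfl⟩
    simp [htc p hp, htc q hq]
  have hker : finrank ℝ (LinearMap.ker φ) < finrank ℝ E :=
    Submodule.finrank_lt fun h => hφ (LinearMap.ker_eq_top.1 h)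
  have := ht.card_le_finrank_succ
  have := Submodule.finrank_mono hspan
  simp only [Fintype.card_coe] at *
  omega

end ConvexGeometry

section ColorfulCaratheodory

variable {ι E : Type*}

section InnerProductSpace

variable [NormedAddCommGroup E] [InnerProductSpace ℝ E]

theorem norm_eq_infDist_zero_iff {K : Set E} (hK : Convex ℝ K) {z : E} (hz : z ∈ K) :
    ‖z‖ = infDist 0 K ↔ ∀ w ∈ K, ‖z‖ ^ 2 ≤ ⟪z, w⟫_ℝ := by
  have h := norm_eq_iInf_iff_real_inner_le_zero hK (u := 0) hz
  simp only [zero_sub, norm_neg, inner_neg_left, inner_sub_right,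
    real_inner_self_eq_norm_sq] at h
  rw [infDist_eq_iInf]
  simp only [dist_zero_left]
  rw [h]
  exact forall₂_congr fun w _ => by constructor <;> intro <;> linarith

theorem exists_card_le_finrank_mem_convexHull_image [FiniteDimensional ℝ E] [Fintype ι]
    {x : ι → E} {z : E} (hz : z ∈ convexHull ℝ (range x)) (hz₀ : z ≠ 0)
    (hmin : ‖z‖ = infDist 0 (convexHull ℝ (range x))) :
    ∃ I : Finset ι, #I ≤ finrank ℝ E ∧ z ∈ convexHull ℝ (x '' I) := by
  classical
  have hle := (norm_eq_infDist_zero_iff (convex_convexHull ℝ _) hz).1 hmin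
  have hface := mem_convexHull_image_of_le_of_eq hz (innerₛₗ ℝ z) (c := ‖z‖ ^ 2)
    (fun i => hle _ (subset_convexHull ℝ _ (mem_range_self i))) (by simp)
  rw [convexHull_eq_union] at hface
  simp only [mem_iUnion] at hface
  obtain ⟨t, hts, ht, hzt⟩ := hface
  have hφ : innerₛₗ ℝ z ≠ 0 := fun h => hz₀ (by simpa using congr($h z))
  have htc : ∀ y ∈ t, innerₛₗ ℝ z y = ‖z‖ ^ 2 := fun y hy => by
    obtain ⟨i, hi, rfl⟩ := hts hy
    exact hi
  have : Nonempty ι := range_nonempty_iff_nonempty.1 (convexHull_nonempty_iff.1 ⟨z, hz⟩)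
  refine ⟨t.image (Function.invFun x),
    Finset.card_image_le.trans (card_le_finrank_of_affineIndependent_of_apply_eq ht hφ htc),
    convexHull_mono ?_ hzt⟩
  intro y hy
  obtain ⟨i, -, rfl⟩ := hts hy
  exact ⟨Function.invFun x (x i), by simpa using ⟨x i, hy, rfl⟩, Function.invFun_eq ⟨i, rfl⟩⟩

theorem colorful_caratheodory_of_innerProductSpace [FiniteDimensional ℝ E] [Fintype ι]
    (hι : finrank ℝ E < Fintype.card ι) (C : ι → Finset E)
    (hC : ∀ i, (0 : E) ∈ convexHull ℝ (C i : Set E)) :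
    ∃ x : ι → E, (∀ i, x i ∈ C i) ∧ (0 : E) ∈ convexHull ℝ (range x) := by
  classical
  have : Nonempty ι := Fintype.card_pos_iff.1 (by omega)
  set D : (ι → E) → ℝ := fun x => infDist 0 (convexHull ℝ (range x))
  have hne : (Fintype.piFinset C).Nonempty := Fintype.piFinset_nonempty.2 fun i =>
    Finset.coe_nonempty.1 (convexHull_nonempty_iff.1 ⟨0, hC i⟩)
  obtain ⟨x, hxC, hxmin⟩ := (Fintype.piFinset C).exists_min_image D hne
  rw [Fintype.mem_piFinset] at hxC
  obtain ⟨z, hz, hzD⟩ := ((finite_range x).isCompact_convexHull ℝ).exists_infDist_eq_dist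
    (convexHull_nonempty_iff.2 (range_nonempty x)) 0
  rw [dist_zero_left] at hzD
  refine ⟨x, hxC, ?_⟩
  -- If the nearest point `z` were not `0`, replacing a vertex not needed for `z` by one on the
  -- far side of the hyperplane `⟪z, ·⟫ = 0` would give a colorful simplex closer to `0`.
  by_contra h0
  have hz₀ : z ≠ 0 := by rintro rfl; exact h0 hz
  obtain ⟨I, hIcard, hzI⟩ := exists_card_le_finrank_mem_convexHull_image hz hz₀ hzD.symm
  obtain ⟨i₀, -, hi₀⟩ := Finset.exists_mem_notMem_of_card_lt_card
    (hIcard.trans_lt (hι.trans_eq Finset.card_univ.symm))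
  obtain ⟨x', hx'C, hx'z⟩ := exists_apply_nonpos_of_zero_mem_convexHull (hC i₀) (innerₛₗ ℝ z)
  set y := Function.update x i₀ x'
  have hyC : y ∈ Fintype.piFinset C := Fintype.mem_piFinset.2 fun i => by
    rcases eq_or_ne i i₀ with rfl | hi
    · simpa [y] using hx'C
    · simpa [y, hi] using hxC i
  have hzy : z ∈ convexHull ℝ (range y) := convexHull_mono (by
    rintro _ ⟨i, hi, rfl⟩
    exact ⟨i, Function.update_of_ne (by rintro rfl; exact hi₀ hi) _ _⟩) hzI
  have hx'y : x' ∈ convexHull ℝ (range y) :=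
    subset_convexHull ℝ _ ⟨i₀, Function.update_self _ _ _⟩
  have hDy : ‖z‖ = D y := le_antisymm (hzD ▸ hxmin y hyC)
    (by simpa using infDist_le_dist_of_mem (x := (0 : E)) hzy)
  have hzx' := (norm_eq_infDist_zero_iff (convex_convexHull ℝ _) hzy).1 hDy x' hx'y
  have hz_pos : 0 < ‖z‖ := norm_pos_iff.2 hz₀
  simp only [innerₛₗ_apply_apply] at hx'z
  nlinarith

end InnerProductSpace

theorem colorful_caratheodory [AddCommGroup E] [Module ℝ E] [FiniteDimensional ℝ E] [Fintype ι]
    (hι : finrank ℝ E < Fintype.card ι) (C : ι → Finset E)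
    (hC : ∀ i, (0 : E) ∈ convexHull ℝ (C i : Set E)) :
    ∃ x : ι → E, (∀ i, x i ∈ C i) ∧ (0 : E) ∈ convexHull ℝ (range x) := by
  classical
  let e : E ≃ₗ[ℝ] EuclideanSpace ℝ (Fin (finrank ℝ E)) := LinearEquiv.ofFinrankEq _ _ (by simp)
  obtain ⟨x, hxC, hx⟩ := colorful_caratheodory_of_innerProductSpace (E := EuclideanSpace ℝ _)
    (by simpa using hι) (fun i => (C i).image e) fun i => by
      rw [Finset.coe_image, ← LinearEquiv.coe_toLinearMap, ← LinearMap.image_convexHull]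
      exact ⟨0, hC i, map_zero _⟩
  refine ⟨fun i => e.symm (x i), fun i => ?_, ?_⟩
  · obtain ⟨y, hy, hyx⟩ := Finset.mem_image.1 (hxC i)
    simpa [← hyx] using hy
  · rw [range_comp' e.symm x, ← LinearEquiv.coe_toLinearMap, ← LinearMap.image_convexHull]
    exact ⟨0, hx, map_zero _⟩

end ColorfulCaratheodory

section Tverberg

variable {ι V : Type*} [AddCommGroup V] [Module ℝ V]

/-- Vertices of a simplex in `ℝ^r` with barycenter `0`; the only linear relations among them
are multiples of `∑ j, u j = 0`. -/
def simplexVertex (r : ℕ) : Fin (r + 1) → Fin r → ℝ :=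
  Fin.lastCases (fun _ => -1) fun j => Pi.single j 1

/-- Sarkaria's lift `q ↦ q ⊗ u j`, with `V ⊗ ℝ^r` realised as `Fin r → V`. -/
def sarkariaLift (r : ℕ) (j : Fin (r + 1)) : V →ₗ[ℝ] Fin r → V :=
  LinearMap.pi fun l => simplexVertex r j l • LinearMap.id

theorem sum_sarkariaLift (r : ℕ) (q : V) : ∑ j, sarkariaLift r j q = 0 := by
  ext l
  simp [sarkariaLift, simplexVertex, Fin.sum_univ_castSucc, Finset.sum_apply, Pi.single_apply,
    ← Finset.sum_smul]

theorem eq_last_of_sum_sarkariaLift_eq_zero {r : ℕ} {B : Fin (r + 1) → V}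
    (hB : ∑ j, sarkariaLift r j (B j) = 0) (j : Fin (r + 1)) : B j = B (Fin.last r) := by
  induction j using Fin.lastCases with
  | last => rfl
  | cast l =>
    have := congrFun hB l
    simp only [sarkariaLift, simplexVertex, Finset.sum_apply, LinearMap.pi_apply,
      LinearMap.smul_apply, LinearMap.id_coe, id_eq, Fin.sum_univ_castSucc, Fin.lastCases_castSucc,
      Pi.single_apply, ite_smul, one_smul, zero_smul, sum_ite_eq, Finset.mem_univ, ↓reduceIte,
      Fin.lastCases_last, neg_smul, Pi.zero_apply] at this
    exact add_neg_eq_zero.1 this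

theorem zero_mem_convexHull_sarkariaLift (r : ℕ) (q : V) :
    (0 : Fin r → V) ∈ convexHull ℝ (range fun j => sarkariaLift r j q) :=
  zero_mem_convexHull_range_of_sum_eq_zero (sum_sarkariaLift r q)

/-- Tverberg's theorem for points on the affine hyperplane `ℓ = 1` (of dimension
`finrank ℝ V - 1`), in weighted form: `b` lies in the convex hull of every part `f⁻¹' {j}`. -/
theorem exists_tverberg_partition [FiniteDimensional ℝ V] [Fintype ι] {r : ℕ}
    (hι : finrank ℝ V * r < Fintype.card ι) (ℓ : V →ₗ[ℝ] ℝ) (q : ι → V) (hq : ∀ i, ℓ (q i) = 1) :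
    ∃ (f : ι → Fin (r + 1)) (w : ι → ℝ) (b : V), (∀ i, 0 ≤ w i) ∧
      ∀ j, ∑ i with f i = j, w i = 1 ∧ ∑ i with f i = j, w i • q i = b := by
  classical
  obtain ⟨x, hxC, hx⟩ := colorful_caratheodory (E := Fin r → V)
    (by simpa [finrank_pi_fintype, mul_comm] using hι)
    (fun i => univ.image fun j => sarkariaLift r j (q i))
    fun i => by simpa [Finset.coe_image] using zero_mem_convexHull_sarkariaLift r (q i)
  choose f hf using fun i => Finset.mem_image.1 (hxC i)
  obtain ⟨t, ht₀, ht₁, htx⟩ := exists_weights_of_mem_convexHull_range hx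
  set B : Fin (r + 1) → V := fun j => ∑ i with f i = j, t i • q i
  have hB : ∀ j, B j = B (Fin.last r) := eq_last_of_sum_sarkariaLift_eq_zero <| calc
    ∑ j, sarkariaLift r j (B j) = ∑ j, ∑ i with f i = j, t i • x i := by
      refine Finset.sum_congr rfl fun j _ => ?_
      simp only [B, map_sum, map_smul]
      exact Finset.sum_congr rfl fun i hi => by rw [← (hf i).2, (Finset.mem_filter.1 hi).2]
    _ = 0 := by rw [Finset.sum_fiberwise, htx]
  have hℓB : ∀ j, ℓ (B j) = ∑ i with f i = j, t i := fun j => by simp [B, hq]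
  have hpart : (r + 1 : ℝ) * ℓ (B (Fin.last r)) = 1 := calc
    (r + 1 : ℝ) * ℓ (B (Fin.last r)) = ∑ j, ℓ (B j) := by simp [hB]
    _ = 1 := by simp_rw [hℓB, Finset.sum_fiberwise, ht₁]
  refine ⟨f, fun i => (r + 1) * t i, (r + 1 : ℝ) • B (Fin.last r),
    fun i => mul_nonneg (by positivity) (ht₀ i), fun j => ⟨?_, ?_⟩⟩
  · rw [← Finset.mul_sum, ← hℓB, hB, hpart]
  · simp_rw [mul_smul, ← Finset.smul_sum]
    exact congrArg _ (hB j)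

end Tverberg

section InnerProduct

variable {ι 𝕜 H : Type*} [RCLike 𝕜] [NormedAddCommGroup H] [InnerProductSpace 𝕜 H]

theorem inner_apply_eq_zero_of_mem_span {T : ι → H →ₗ[𝕜] H} {x y : H}
    (h : ∀ k, ⟪x, T k y⟫_𝕜 = 0) {S : H →ₗ[𝕜] H} (hS : S ∈ Submodule.span 𝕜 (range T)) :
    ⟪x, S y⟫_𝕜 = 0 := by
  induction hS using Submodule.span_induction with
  | mem S hS => obtain ⟨k, rfl⟩ := hS; exact h k
  | zero => simp
  | add S S' _ _ hS hS' => simp [inner_add_right, hS, hS']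
  | smul c S _ hS => simp [inner_smul_right, hS]

theorem exists_norm_eq_one_forall_inner_eq_zero [FiniteDimensional 𝕜 H] (F : Finset H)
    (hF : #F < finrank 𝕜 H) : ∃ u : H, ‖u‖ = 1 ∧ ∀ y ∈ F, ⟪y, u⟫_𝕜 = 0 := by
  have hK : Submodule.span 𝕜 (F : Set H) ≠ ⊤ := fun h => by
    have := finrank_span_finset_le_card (R := 𝕜) F
    rw [Set.finrank, h, finrank_top] at this
    omega
  obtain ⟨u, hu, hu₀⟩ := Submodule.exists_mem_ne_zero_of_ne_bot
    (mt Submodule.orthogonal_eq_bot_iff.1 hK)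
  refine ⟨(‖u‖⁻¹ : 𝕜) • u, norm_smul_inv_norm hu₀, fun y hy => ?_⟩
  rw [inner_smul_right, Submodule.inner_right_of_mem_orthogonal (Submodule.subset_span hy) hu,
    mul_zero]

theorem exists_finset_pairwise_inner_apply_eq_zero [FiniteDimensional 𝕜 H] [Fintype ι]
    {T : ι → H →ₗ[𝕜] H} (hT : ∀ k, (T k).IsSymmetric)
    (hid : LinearMap.id ∈ Submodule.span 𝕜 (range T)) {m : ℕ}
    (hm : (m - 1) * Fintype.card ι < finrank 𝕜 H) :
    ∃ S : Finset H, #S = m ∧ (∀ x ∈ S, ‖x‖ = 1) ∧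
      ∀ k, (S : Set H).Pairwise fun x y => ⟪x, T k y⟫_𝕜 = 0 := by
  classical
  induction m with
  | zero => exact ⟨∅, rfl, by simp, by simp⟩
  | succ m ih =>
    obtain ⟨S, hcard, hnorm, hS⟩ := ih
      (lt_of_le_of_lt (Nat.mul_le_mul_right _ (by omega)) hm)
    obtain ⟨u, hu, huS⟩ := exists_norm_eq_one_forall_inner_eq_zero
      ((S ×ˢ Finset.univ).image fun p : H × ι => T p.2 p.1)
      ((Finset.card_image_le.trans_eq (by simp [hcard] : _ = m * Fintype.card ι)).trans_lt
        (by simpa using hm))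
    have hTu : ∀ x ∈ S, ∀ k, ⟪T k x, u⟫_𝕜 = 0 := fun x hx k =>
      huS _ (Finset.mem_image.2 ⟨(x, k), by simp [hx], rfl⟩)
    have hxu : ∀ x ∈ S, ⟪x, u⟫_𝕜 = 0 := fun x hx => by
      simpa [inner_eq_zero_symm] using inner_apply_eq_zero_of_mem_span (x := u) (y := x)
        (fun k => inner_eq_zero_symm.1 (hTu x hx k)) hid
    have huS : u ∉ S := fun h => by simpa [hu] using hxu u h
    refine ⟨insert u S, by rw [Finset.card_insert_of_notMem huS, hcard], ?_, fun k => ?_⟩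
    · simpa [hu] using hnorm
    · rw [Finset.coe_insert, Set.pairwise_insert]
      refine ⟨hS k, fun x hx _ => ⟨?_, ?_⟩⟩
      · exact inner_eq_zero_symm.1 (hTu x hx k)
      · rw [← hT k, hTu x hx k]

theorem inner_sum_fiber_apply_sum_fiber {κ : Type*} [Fintype ι] [DecidableEq κ] {v : ι → H}
    {T : H →ₗ[𝕜] H} (hT : Pairwise fun i i' => ⟪v i, T (v i')⟫_𝕜 = 0) (f : ι → κ) (a : ι → ℝ)
    (j l : κ) :
    ⟪∑ i with f i = j, (a i : 𝕜) • v i, T (∑ i with f i = l, (a i : 𝕜) • v i)⟫_𝕜 =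
      if j = l then ∑ i with f i = j, ((a i ^ 2 : ℝ) : 𝕜) * ⟪v i, T (v i)⟫_𝕜 else 0 := by
  classical
  have hterm : ∀ i i', ⟪(a i : 𝕜) • v i, T ((a i' : 𝕜) • v i')⟫_𝕜 =
      if i = i' then ((a i ^ 2 : ℝ) : 𝕜) * ⟪v i, T (v i)⟫_𝕜 else 0 := fun i i' => by
    rw [map_smul, inner_smul_left, inner_smul_right, RCLike.conj_ofReal]
    split_ifs with h
    · subst h; push_cast; ring
    · rw [hT h, mul_zero, mul_zero]
  simp_rw [sum_inner, map_sum, inner_sum, hterm, Finset.sum_ite_eq, Finset.mem_filter,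
    Finset.mem_univ, true_and]
  split_ifs with h
  · exact Finset.sum_congr rfl fun i hi => by rw [if_pos ((Finset.mem_filter.1 hi).2.trans h)]
  · exact Finset.sum_eq_zero fun i hi => by
      rw [if_neg fun h' => h ((Finset.mem_filter.1 hi).2.symm.trans h')]

end InnerProduct

section Code

theorem conjTranspose_mul_mul_apply {n : ℕ} {ι : Type*} (W : ι → EuclideanSpace ℂ (Fin n))
    (A : Matrix (Fin n) (Fin n) ℂ) (j l : ι) :
    ((Matrix.of fun a i => W i a)ᴴ * A * Matrix.of fun a i => W i a) j l =
      ⟪W j, toEuclideanLin A (W l)⟫_ℂ := by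
  simp only [Matrix.mul_apply, conjTranspose_apply, of_apply, Finset.sum_mul,
    EuclideanSpace.inner_eq_star_dotProduct, toLpLin_apply, dotProduct, mulVec]
  rw [Finset.sum_comm]
  refine Finset.sum_congr rfl fun a _ => Finset.sum_congr rfl fun b _ => ?_
  simp only [RCLike.star_def, Pi.star_apply]
  ring

variable {n : ℕ} {ι : Type*} [Fintype ι] [DecidableEq ι]

theorem isCodeProj_mul_conjTranspose (G : QuantumGraph n) {M : Matrix (Fin n) ι ℂ}
    (hM : Mᴴ * M = 1) {ε : Matrix (Fin n) (Fin n) ℂ → ℝ}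
    (hMA : ∀ A ∈ G.E, Mᴴ * A * M = (ε A : ℂ) • 1) : IsCodeProj G (M * Mᴴ) ε := by
  refine ⟨isHermitian_mul_conjTranspose_self M, ?_, fun A hA => ?_⟩
  · rw [Matrix.mul_assoc, ← Matrix.mul_assoc Mᴴ, hM, Matrix.one_mul]
  · calc M * Mᴴ * A * (M * Mᴴ) = M * (Mᴴ * A * M) * Mᴴ := by simp only [Matrix.mul_assoc]
      _ = (ε A : ℂ) • (M * Mᴴ) := by rw [hMA A hA, Matrix.mul_smul, Matrix.mul_one,
          Matrix.smul_mul]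

theorem card_le_rank_mul_conjTranspose {M : Matrix (Fin n) ι ℂ} (hM : Mᴴ * M = 1) :
    Fintype.card ι ≤ (M * Mᴴ).rank := calc
  Fintype.card ι = (Mᴴ * M).rank := by rw [hM, rank_one]
  _ ≤ M.rank := rank_mul_le_right _ _
  _ = (M * Mᴴ * M).rank := by rw [Matrix.mul_assoc, hM, Matrix.mul_one]
  _ ≤ (M * Mᴴ).rank := rank_mul_le_left _ _

theorem exists_isCodeProj_of_orthonormal (G : QuantumGraph n) {W : ι → EuclideanSpace ℂ (Fin n)}
    (hW : Orthonormal ℂ W) {ε : Matrix (Fin n) (Fin n) ℂ → ℝ}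
    (hWA : ∀ A ∈ G.E, ∀ j l, ⟪W j, toEuclideanLin A (W l)⟫_ℂ = if j = l then (ε A : ℂ) else 0) :
    ∃ P, IsCodeProj G P ε ∧ Fintype.card ι ≤ P.rank := by
  set M : Matrix (Fin n) ι ℂ := Matrix.of fun a i => W i a
  have hM : Mᴴ * M = 1 := by
    ext j l
    rw [← Matrix.mul_one Mᴴ, conjTranspose_mul_mul_apply, toLpLin_one, LinearMap.id_apply,
      Matrix.one_apply]
    exact orthonormal_iff_ite.1 hW j l
  refine ⟨M * Mᴴ, isCodeProj_mul_conjTranspose G hM fun A hA => ?_,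
    card_le_rank_mul_conjTranspose hM⟩
  ext j l
  simp [M, conjTranspose_mul_mul_apply, hWA A hA, Matrix.one_apply]

end Code

section QuantumGraph

variable {n : ℕ}

noncomputable def vectorState (x : EuclideanSpace ℂ (Fin n)) :
    Matrix (Fin n) (Fin n) ℂ →ₗ[ℝ] ℝ :=
  Complex.reLm ∘ₗ
    (innerₛₗ ℂ x ∘ₗ LinearMap.applyₗ x ∘ₗ toEuclideanLin.toLinearMap).restrictScalars ℝ

theorem vectorState_apply (x : EuclideanSpace ℂ (Fin n)) (A : Matrix (Fin n) (Fin n) ℂ) :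
    vectorState x A = (⟪x, toEuclideanLin A x⟫_ℂ).re := rfl

theorem coe_vectorState_of_isHermitian (x : EuclideanSpace ℂ (Fin n))
    {A : Matrix (Fin n) (Fin n) ℂ} (hA : A.IsHermitian) :
    (vectorState x A : ℂ) = ⟪x, toEuclideanLin A x⟫_ℂ :=
  (isSymmetric_toEuclideanLin_iff.2 hA).coe_re_inner_self_apply x

theorem toEuclideanLin_mem_span_basis (G : QuantumGraph n) {κ : Type*} [Fintype κ]
    (b : Basis κ ℝ G.E) {A : Matrix (Fin n) (Fin n) ℂ} (hA : A ∈ G.E) :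
    toEuclideanLin A ∈ Submodule.span ℂ (range fun k => toEuclideanLin (b k : Matrix _ _ ℂ)) := by
  have hsum : ((∑ k, b.repr ⟨A, hA⟩ k • b k : G.E) : Matrix _ _ ℂ) = A := by rw [b.sum_repr]
  rw [← hsum]
  simp only [Submodule.coe_sum, Submodule.coe_smul, map_sum]
  refine Submodule.sum_mem _ fun k _ => ?_
  rw [LinearMapClass.map_smul_of_tower]
  exact Submodule.smul_of_tower_mem _ _ (Submodule.subset_span (mem_range_self k))

theorem QuantumGraph.exists_finset_pairwise_inner_eq_zero (G : QuantumGraph n) {m : ℕ}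
    (hm : (m - 1) * finrank ℝ G.E < n) :
    ∃ S : Finset (EuclideanSpace ℂ (Fin n)), #S = m ∧ (∀ x ∈ S, ‖x‖ = 1) ∧
      ∀ A ∈ G.E, (S : Set _).Pairwise fun x y => ⟪x, toEuclideanLin A y⟫_ℂ = 0 := by
  set b := finBasis ℝ G.E
  have hid := toEuclideanLin_mem_span_basis G b G.one_mem
  rw [toLpLin_one] at hid
  have hm' : (m - 1) * Fintype.card (Fin (finrank ℝ G.E)) <
      finrank ℂ (EuclideanSpace ℂ (Fin n)) := by
    rwa [Fintype.card_fin, finrank_euclideanSpace_fin]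
  obtain ⟨S, hcard, hS₁, hS⟩ := exists_finset_pairwise_inner_apply_eq_zero
    (fun k => isSymmetric_toEuclideanLin_iff.2 (G.herm _ (b k).2)) hid hm'
  exact ⟨S, hcard, hS₁, fun A hA x hx y hy hxy =>
    inner_apply_eq_zero_of_mem_span (fun k => hS k hx hy hxy)
      (toEuclideanLin_mem_span_basis G b hA)⟩

theorem QuantumGraph.exists_orthonormal_compression_eq_smul (G : QuantumGraph n)
    {S : Finset (EuclideanSpace ℂ (Fin n))} (hS₁ : ∀ x ∈ S, ‖x‖ = 1)
    (hS : ∀ A ∈ G.E, (S : Set _).Pairwise fun x y => ⟪x, toEuclideanLin A y⟫_ℂ = 0) {r : ℕ}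
    (hr : finrank ℝ G.E * r < #S) :
    ∃ (W : Fin (r + 1) → EuclideanSpace ℂ (Fin n)) (ε : Matrix (Fin n) (Fin n) ℂ → ℝ),
      Orthonormal ℂ W ∧
        ∀ A ∈ G.E, ∀ j l, ⟪W j, toEuclideanLin A (W l)⟫_ℂ = if j = l then (ε A : ℂ) else 0 := by
  classical
  set ℓ : Dual ℝ (Dual ℝ G.E) := Dual.eval ℝ G.E ⟨1, G.one_mem⟩
  set q : S → Dual ℝ G.E := fun x => (vectorState (x : EuclideanSpace ℂ (Fin n))).comp G.E.subtype
  have hq : ∀ x, ℓ (q x) = 1 := fun x => by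
    simp [ℓ, q, vectorState_apply, toLpLin_one, hS₁ x x.2]
  obtain ⟨f, w, β, hw₀, hw⟩ := exists_tverberg_partition
    (by rwa [Subspace.dual_finrank_eq, Fintype.card_coe]) ℓ q hq
  set W : Fin (r + 1) → EuclideanSpace ℂ (Fin n) :=
    fun j => ∑ i with f i = j, ((√(w i) : ℝ) : ℂ) • (i : EuclideanSpace ℂ (Fin n))
  have hW : ∀ A (hA : A ∈ G.E) j l,
      ⟪W j, toEuclideanLin A (W l)⟫_ℂ = if j = l then (β ⟨A, hA⟩ : ℂ) else 0 := by
    intro A hA j l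
    have hpair := (Finset.pairwise_subtype_iff_pairwise_finset _).2 (hS A hA)
    refine (inner_sum_fiber_apply_sum_fiber hpair f (fun i => √(w i)) j l).trans ?_
    split_ifs with hjl
    · simp_rw [Real.sq_sqrt (hw₀ _), ← coe_vectorState_of_isHermitian _ (G.herm A hA),
        ← (hw j).2]
      simp [q]
    · rfl
  have hβ : β ⟨1, G.one_mem⟩ = 1 := calc
    β ⟨1, G.one_mem⟩ = ℓ (∑ i with f i = 0, w i • q i) := by rw [(hw 0).2]; rfl
    _ = 1 := by simpa only [map_sum, map_smul, hq, smul_eq_mul, mul_one] using (hw 0).1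
  refine ⟨W, fun A => if hA : A ∈ G.E then β ⟨A, hA⟩ else 0, orthonormal_iff_ite.2 fun j l => ?_,
    fun A hA j l => by simp [hW A hA, hA]⟩
  simpa [toLpLin_one, hβ] using hW 1 G.one_mem j l

end QuantumGraph

theorem Nat.add_sub_one_div_sub_one_mul_lt {n D : ℕ} (hn : 0 < n) :
    ((n + D - 1) / D - 1) * D < n := by
  have := Nat.div_mul_le_self (n + D - 1) D
  rw [Nat.sub_one_mul]
  omega

/-- Here `‖G‖ = finrank ℝ G.E - 1` and `(a + b - 1) / b = ⌈a / b⌉`. -/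
theorem exists_code_tverberg {n : ℕ} (hn : 0 < n) (G : QuantumGraph n) :
    ∃ (P : Matrix (Fin n) (Fin n) ℂ) (ε : Matrix (Fin n) (Fin n) ℂ → ℝ),
      IsCodeProj G P ε ∧
      (n + (Module.finrank ℝ G.E - 1 + 1) ^ 2 - 1) / (Module.finrank ℝ G.E - 1 + 1) ^ 2 ≤
        P.rank := by
  set d := finrank ℝ G.E
  set D := (d - 1 + 1) ^ 2
  set s := (n + D - 1) / D - 1
  have hs : d * s * d < n := calc
    d * s * d ≤ s * D := by
      rw [mul_comm d s, mul_assoc, ← sq]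
      exact Nat.mul_le_mul_left s (Nat.pow_le_pow_left (by omega) 2)
    _ < n := Nat.add_sub_one_div_sub_one_mul_lt hn
  obtain ⟨S, hcard, hS₁, hS⟩ := G.exists_finset_pairwise_inner_eq_zero (m := d * s + 1)
    (by simpa using hs)
  obtain ⟨W, ε, hW, hWA⟩ := G.exists_orthonormal_compression_eq_smul hS₁ hS (r := s)
    (by rw [hcard]; exact Nat.lt_succ_self _)
  obtain ⟨P, hP, hrank⟩ := exists_isCodeProj_of_orthonormal G hW hWA
  refine ⟨P, ε, hP, le_trans ?_ hrank⟩
  simp only [Fintype.card_fin]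
  omega
end
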